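/- arXiv:2103.11250 — 5 statements merged into one kernel-verified Lean document; each statement's English description precedes it below -/
import Mathlib

section
/- Let N be a positive integer, let z_1, …, z_N be the zeros of the physicists' Hermite polynomial H_N, and define the power sums m_p := z_1^p + ⋯ + z_N^p for integers p ≥ 0. Then m_0 = N, m_p = 0 for every odd p, and for every even integer k ≥ 0 the recurrence 2 m_{k+2} = Σ_{s=0}^{k/2} m_{2s} m_{k−2s} − (k+1) m_k holds. -/
open Polynomial Finset

/-- The physicists' Hermite polynomials, satisfying
`H_{n+1}(x) = 2 x H_n(x) - H_n'(x)`, equivalently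
`H_n(x) = (-1)^n e^{x^2} (d/dx)^n e^{-x^2}`. -/
noncomputable def physHermite : ℕ → Polynomial ℝ
  | 0 => 1
  | n + 1 => 2 * X * physHermite n - derivative (physHermite n)

/-!
At a zero `a = z j` of `H_N = 2^N ∏ (X - z_i)` the equation `H'' = 2 X H' - 2 N H` reads
`H''(a) = 2 a H'(a)`, while `H''(a) = 2 H'(a) ∑_{l ≠ j} 1 / (a - z_l)` for any product of distinct
linear factors; hence the Stieltjes relations `∑_{l ≠ j} 1 / (z_j - z_l) = z_j`. Multiplying by
`z_j^(k+1)`, summing over `j` and symmetrising in `(j, l)` turns each pair into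
`(z_j^(k+1) - z_l^(k+1)) / (z_j - z_l) = ∑_i z_j^i z_l^(k-i)`, which gives
`2 m_(k+2) = ∑_{i ≤ k} m_i m_(k-i) - (k+1) m_k`. Since `H_N(-x) = (-1)^N H_N(x)`, the zeros are
symmetric about `0`, so the odd power sums vanish and only even `i` contribute.
-/

section ProductOfLinearFactors

variable {K ι : Type*} [Field K]

lemma eval_derivative_prod_X_sub_C [DecidableEq ι] {s : Finset ι} {w : ι → K} {a : K}
    (ha : ∀ i ∈ s, a ≠ w i) :
    (derivative (∏ i ∈ s, (X - C (w i)))).eval a = (∏ i ∈ s, (a - w i)) * ∑ i ∈ s, (a - w i)⁻¹ := by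
  rw [derivative_prod_finset, eval_finsetSum, mul_sum]
  refine sum_congr rfl fun i hi => ?_
  simp only [derivative_X_sub_C, mul_one, eval_prod, eval_sub, eval_X, eval_C]
  rw [← mul_prod_erase s _ hi]
  field_simp [sub_ne_zero.2 (ha i hi)]

variable [Fintype ι]

lemma eq_C_leadingCoeff_mul_prod_X_sub_C {p : K[X]} {z : ι → K} (hz : Function.Injective z)
    (hdeg : p.natDegree = Fintype.card ι) (hroot : ∀ i, p.IsRoot (z i)) :
    p = C p.leadingCoeff * ∏ i, (X - C (z i)) := by
  have hmonic : (∏ i, (X - C (z i))).Monic := monic_prod_of_monic _ _ fun i _ => monic_X_sub_C _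
  obtain ⟨q, rfl⟩ : ∏ i, (X - C (z i)) ∣ p :=
    prod_dvd_of_coprime ((pairwise_coprime_X_sub_C hz).set_pairwise _)
      fun i _ => dvd_iff_isRoot.2 (hroot i)
  rcases eq_or_ne q 0 with rfl | hq
  · simp
  have hq0 : q.natDegree = 0 := by
    rw [natDegree_mul hmonic.ne_zero hq, natDegree_prod_of_monic _ _ fun i _ => monic_X_sub_C _]
      at hdeg
    simpa using hdeg
  rw [leadingCoeff_mul, hmonic.leadingCoeff, one_mul, leadingCoeff, hq0,
    ← eq_C_of_natDegree_eq_zero hq0, mul_comm]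

lemma eval_prod_X_sub_C_eq_zero_iff (z : ι → K) (x : K) :
    (∏ i, (X - C (z i))).eval x = 0 ↔ ∃ i, z i = x := by
  simp [eval_prod, prod_eq_zero_iff, sub_eq_zero, eq_comm (a := x)]

variable [DecidableEq ι]

lemma eval_derivative_prod_X_sub_C_self (z : ι → K) (j : ι) :
    (derivative (∏ i, (X - C (z i)))).eval (z j) = ∏ l ∈ univ.erase j, (z j - z l) := by
  rw [← mul_prod_erase univ _ (mem_univ j)]
  simp [eval_prod]

lemma eval_derivative_derivative_prod_X_sub_C_self {z : ι → K} (hz : Function.Injective z)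
    (j : ι) :
    (derivative (derivative (∏ i, (X - C (z i))))).eval (z j) =
      2 * (derivative (∏ i, (X - C (z i)))).eval (z j) * ∑ l ∈ univ.erase j, (z j - z l)⁻¹ := by
  have hne : ∀ l ∈ univ.erase j, z j ≠ z l := fun l hl => hz.ne (ne_of_mem_erase hl).symm
  rw [eval_derivative_prod_X_sub_C_self, ← mul_prod_erase univ _ (mem_univ j)]
  simp only [derivative_mul, derivative_add, derivative_X_sub_C, one_mul, eval_add, eval_mul,
    eval_sub, eval_X, eval_C, sub_self, zero_mul, add_zero]
  rw [eval_derivative_prod_X_sub_C hne]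
  ring

end ProductOfLinearFactors

lemma sum_range_two_mul_add_one_of_odd_eq_zero {M : Type*} [AddCommMonoid M] {g : ℕ → M}
    (hg : ∀ i, Odd i → g i = 0) (t : ℕ) :
    ∑ i ∈ range (2 * t + 1), g i = ∑ s ∈ range (t + 1), g (2 * s) := by
  induction t with
  | zero => simp
  | succ t ih =>
    rw [sum_range_succ _ (t + 1), ← ih, show 2 * (t + 1) + 1 = 2 * t + 1 + 1 + 1 by ring,
      sum_range_succ, sum_range_succ, hg _ (odd_two_mul_add_one t), add_zero]
    rfl

section PowerSums

variable {ι : Type*} [Fintype ι]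

lemma sum_pow_eq_zero_of_odd {R : Type*} [CommRing R] [NoZeroDivisors R] [CharZero R]
    {z : ι → R} (hz : Function.Injective z) (hneg : ∀ j, ∃ i, z i = -z j) {p : ℕ} (hp : Odd p) :
    ∑ j, z j ^ p = 0 := by
  choose σ hσ using hneg
  have hσ_inj : Function.Injective σ := fun a b hab =>
    hz (neg_injective (by rw [← hσ a, ← hσ b, hab]))
  rw [← CharZero.eq_neg_self_iff]
  calc ∑ j, z j ^ p = ∑ j, z (σ j) ^ p := (hσ_inj.bijective_of_finite.sum_comp _).symm
    _ = -∑ j, z j ^ p := by simp only [hσ, hp.neg_pow, sum_neg_distrib]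

variable [DecidableEq ι]

lemma sum_sum_erase_comm {M : Type*} [AddCommMonoid M] (f : ι → ι → M) :
    ∑ j, ∑ l ∈ univ.erase j, f j l = ∑ j, ∑ l ∈ univ.erase j, f l j :=
  sum_comm' fun j l => by simp [ne_comm]

lemma sum_sum_erase_mul {R : Type*} [CommRing R] (g h : ι → R) :
    ∑ j, ∑ l ∈ univ.erase j, g j * h l = (∑ j, g j) * (∑ l, h l) - ∑ j, g j * h j := by
  simp only [← mul_sum, sum_erase_eq_sub (mem_univ _), sum_sub_distrib, sum_mul]

theorem two_mul_sum_pow_add_two {K : Type*} [Field K] {z : ι → K} (hz : Function.Injective z)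
    (hstieltjes : ∀ j, ∑ l ∈ univ.erase j, (z j - z l)⁻¹ = z j) (k : ℕ) :
    2 * ∑ j, z j ^ (k + 2) =
      ∑ i ∈ range (k + 1), (∑ j, z j ^ i) * (∑ j, z j ^ (k - i)) - (k + 1) * ∑ j, z j ^ k := by
  have hne : ∀ j, ∀ l ∈ univ.erase j, z j - z l ≠ 0 :=
    fun j l hl => sub_ne_zero.2 (hz.ne (ne_of_mem_erase hl).symm)
  have hdiag : ∀ j, ∑ l ∈ univ.erase j, z j ^ (k + 1) * (z j - z l)⁻¹ = z j ^ (k + 2) := by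
    intro j
    rw [← mul_sum, hstieltjes, ← pow_succ]
  have hsymm : ∀ j, ∀ l ∈ univ.erase j,
      z j ^ (k + 1) * (z j - z l)⁻¹ + z l ^ (k + 1) * (z l - z j)⁻¹ =
        ∑ i ∈ range (k + 1), z j ^ i * z l ^ (k - i) := by
    intro j l hl
    have hgeom := geom_sum₂_mul (z j) (z l) (k + 1)
    simp only [Nat.add_sub_cancel] at hgeom
    rw [← neg_sub (z j), inv_neg, mul_neg, ← sub_eq_add_neg, ← sub_mul, ← hgeom,
      mul_inv_cancel_right₀ (hne j l hl)]
  calc 2 * ∑ j, z j ^ (k + 2)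
      = ∑ j, ∑ l ∈ univ.erase j,
          (z j ^ (k + 1) * (z j - z l)⁻¹ + z l ^ (k + 1) * (z l - z j)⁻¹) := by
        simp only [sum_add_distrib]
        rw [← sum_sum_erase_comm (fun j l => z j ^ (k + 1) * (z j - z l)⁻¹)]
        simp only [hdiag]
        ring
    _ = ∑ i ∈ range (k + 1), ∑ j, ∑ l ∈ univ.erase j, z j ^ i * z l ^ (k - i) := by
        rw [sum_congr rfl fun j _ => sum_congr rfl (hsymm j), sum_comm]
        exact sum_congr rfl fun j _ => sum_comm
    _ = _ := by
        simp only [sum_sum_erase_mul, sum_sub_distrib, ← pow_add]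
        have hexp : ∀ i ∈ range (k + 1), ∑ j, z j ^ (i + (k - i)) = ∑ j, z j ^ k :=
          fun i hi => by rw [Nat.add_sub_cancel' (mem_range_succ_iff.1 hi)]
        rw [sum_congr rfl hexp, sum_const, card_range, nsmul_eq_mul]
        push_cast
        ring

end PowerSums

lemma physHermite_succ (n : ℕ) :
    physHermite (n + 1) = 2 * X * physHermite n - derivative (physHermite n) := rfl

lemma derivative_physHermite_succ (n : ℕ) :
    derivative (physHermite (n + 1)) = 2 * ((n : ℝ[X]) + 1) * physHermite n := by
  induction n with
  | zero => simp [physHermite]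
  | succ n ih =>
    rw [physHermite_succ (n + 1), derivative_sub, derivative_mul, ih, physHermite_succ n]
    simp only [derivative_mul, derivative_X, derivative_ofNat, derivative_add, derivative_natCast,
      derivative_one]
    push_cast
    ring

lemma derivative_derivative_physHermite (n : ℕ) :
    derivative (derivative (physHermite n)) =
      2 * X * derivative (physHermite n) - 2 * (n : ℝ[X]) * physHermite n := by
  cases n with
  | zero => simp [physHermite]
  | succ n =>
    rw [derivative_physHermite_succ, derivative_mul, physHermite_succ]
    simp only [derivative_mul, derivative_ofNat, derivative_add, derivative_natCast,
      derivative_one]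
    push_cast
    ring

lemma physHermite_comp_neg_X (n : ℕ) : (physHermite n).comp (-X) = (-1) ^ n * physHermite n := by
  induction n with
  | zero => simp [physHermite]
  | succ n ih =>
    have hder :
        (derivative (physHermite n)).comp (-X) = -derivative ((physHermite n).comp (-X)) := by
      simp [derivative_comp]
    rw [physHermite_succ, sub_comp, mul_comp, mul_comp, X_comp, hder, ih]
    simp only [derivative_mul, derivative_pow, derivative_neg, derivative_one, ofNat_comp]
    ring

lemma natDegree_physHermite_le (n : ℕ) : (physHermite n).natDegree ≤ n := by
  induction n with
  | zero => simp [physHermite]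
  | succ n ih =>
    have h2X : (2 * X : ℝ[X]).natDegree ≤ 1 := by compute_degree!
    have hmul : (2 * X * physHermite n).natDegree ≤ n + 1 := natDegree_mul_le.trans (by omega)
    have hder : (derivative (physHermite n)).natDegree ≤ n + 1 :=
      (natDegree_derivative_le _).trans (by omega)
    rw [physHermite_succ, ← max_self (n + 1)]
    exact natDegree_sub_le_of_le hmul hder

lemma coeff_physHermite_self (n : ℕ) : (physHermite n).coeff n = 2 ^ n := by
  induction n with
  | zero => simp [physHermite]
  | succ n ih =>
    rw [physHermite_succ, coeff_sub, coeff_derivative,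
      coeff_eq_zero_of_natDegree_lt ((natDegree_physHermite_le n).trans_lt (by omega)), zero_mul,
      sub_zero, mul_assoc, show (2 : ℝ[X]) = C 2 from rfl, coeff_C_mul, coeff_X_mul, ih, pow_succ,
      mul_comm]

lemma natDegree_physHermite (n : ℕ) : (physHermite n).natDegree = n :=
  natDegree_eq_of_le_of_coeff_ne_zero (natDegree_physHermite_le n)
    (by rw [coeff_physHermite_self]; positivity)

lemma leadingCoeff_physHermite (n : ℕ) : (physHermite n).leadingCoeff = 2 ^ n := by
  rw [leadingCoeff, natDegree_physHermite, coeff_physHermite_self]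

lemma physHermite_eq_C_mul_prod {n : ℕ} {z : Fin n → ℝ} (hz : Function.Injective z)
    (hzero : ∀ j, (physHermite n).eval (z j) = 0) :
    physHermite n = C (2 ^ n) * ∏ i, (X - C (z i)) := by
  rw [← leadingCoeff_physHermite]
  exact eq_C_leadingCoeff_mul_prod_X_sub_C hz (by simp [natDegree_physHermite]) hzero

lemma exists_eq_neg_of_physHermite_roots {n : ℕ} {z : Fin n → ℝ} (hz : Function.Injective z)
    (hzero : ∀ j, (physHermite n).eval (z j) = 0) (j : Fin n) : ∃ i, z i = -z j := by
  have h : (physHermite n).eval (-z j) = 0 := by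
    rw [show -z j = (-X : ℝ[X]).eval (z j) by simp, ← eval_comp, physHermite_comp_neg_X, eval_mul,
      hzero, mul_zero]
  rw [physHermite_eq_C_mul_prod hz hzero, eval_mul, eval_C, mul_eq_zero] at h
  exact (eval_prod_X_sub_C_eq_zero_iff z _).1 (h.resolve_left (by positivity))

lemma sum_inv_sub_eq_of_physHermite_roots {n : ℕ} {z : Fin n → ℝ} (hz : Function.Injective z)
    (hzero : ∀ j, (physHermite n).eval (z j) = 0) (j : Fin n) :
    ∑ l ∈ univ.erase j, (z j - z l)⁻¹ = z j := by
  have hP : (∏ i, (X - C (z i))).eval (z j) = 0 := (eval_prod_X_sub_C_eq_zero_iff z _).2 ⟨j, rfl⟩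
  have hP' : (derivative (∏ i, (X - C (z i)))).eval (z j) ≠ 0 := by
    rw [eval_derivative_prod_X_sub_C_self]
    exact prod_ne_zero_iff.2 fun l hl => sub_ne_zero.2 (hz.ne (ne_of_mem_erase hl).symm)
  have hode := congrArg (eval (z j)) (derivative_derivative_physHermite n)
  rw [physHermite_eq_C_mul_prod hz hzero] at hode
  simp only [derivative_C_mul, eval_mul, eval_sub, eval_C, eval_X, eval_ofNat, eval_natCast, hP,
    eval_derivative_derivative_prod_X_sub_C_self hz] at hode
  refine mul_left_cancel₀ (mul_ne_zero (by positivity : (2 : ℝ) ^ n * 2 ≠ 0) hP') ?_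
  linear_combination hode

theorem stmt_1_general (N : ℕ) (z : Fin N → ℝ)
    (hmono : StrictMono z) (hzero : ∀ j, (physHermite N).eval (z j) = 0)
    (m : ℕ → ℝ) (hm : ∀ p, m p = ∑ j, z j ^ p) :
    m 0 = N ∧ (∀ p, Odd p → m p = 0) ∧
      (∀ k, Even k →
        2 * m (k + 2) = (∑ s ∈ range (k / 2 + 1), m (2 * s) * m (k - 2 * s))
          - ((k : ℝ) + 1) * m k) := by
  have hz := hmono.injective
  have hodd : ∀ p, Odd p → m p = 0 := fun p hp =>
    (hm p).trans (sum_pow_eq_zero_of_odd hz (exists_eq_neg_of_physHermite_roots hz hzero) hp)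
  refine ⟨by simp [hm], hodd, fun k ⟨t, hk⟩ => ?_⟩
  have hrec := two_mul_sum_pow_add_two hz (sum_inv_sub_eq_of_physHermite_roots hz hzero) k
  simp only [← hm] at hrec
  rw [hrec, hk, show (t + t) / 2 = t by omega, show t + t + 1 = 2 * t + 1 by omega,
    sum_range_two_mul_add_one_of_odd_eq_zero (fun i hi => by rw [hodd i hi, zero_mul])]

/-- The power sums `m_p` of the zeros of the physicists' Hermite polynomial `H_N`
satisfy `m_0 = N`, vanish for odd `p`, and satisfy the recurrence
`2 m_{k+2} = ∑_{s=0}^{k/2} m_{2s} m_{k-2s} - (k+1) m_k` for even `k`. -/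
theorem stmt_1 (N : ℕ) (hN : 0 < N) (z : Fin N → ℝ)
    (hmono : StrictMono z) (hzero : ∀ j, (physHermite N).eval (z j) = 0)
    (m : ℕ → ℝ) (hm : ∀ p, m p = ∑ j, z j ^ p) :
    m 0 = N ∧ (∀ p, Odd p → m p = 0) ∧
      (∀ k, Even k →
        2 * m (k + 2) = (∑ s ∈ range (k / 2 + 1), m (2 * s) * m (k - 2 * s))
          - ((k : ℝ) + 1) * m k) :=
  stmt_1_general N z hmono hzero m hm
end

section
/- Define a sequence of polynomials M_p(ν) ∈ ℚ[ν] by M_0(ν) = ν, M_p = 0 for odd p, and 2 M_{k+2} = Σ_{s=0}^{k/2} M_{2s} M_{k−2s} − (k+1) M_k for even k ≥ 0. Then for every p ≥ 1: M_{2p} is a polynomial in ν of degree exactly p+1; M_{2p}(0) = 0 and M_{2p}(1) = 0; and the leading coefficient of M_{2p} equals C_p / 2^p, where C_p = (1/(p+1))·binom(2p, p) is the p-th Catalan number. -/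
open Polynomial Finset

/-- For the sequence of polynomials `M_p(ν) ∈ ℚ[ν]` defined by `M_0 = ν`, `M_p = 0` for
odd `p`, and `2 M_{k+2} = ∑_{s=0}^{k/2} M_{2s} M_{k-2s} - (k+1) M_k` for even `k`:
each `M_{2p}` (`p ≥ 1`) has degree exactly `p+1`, vanishes at `ν = 0` and `ν = 1`, and
has leading coefficient `C_p / 2^p` with `C_p` the `p`-th Catalan number. -/
theorem stmt_2 (M : ℕ → Polynomial ℚ)
    (h0 : M 0 = X)
    (hodd : ∀ p, Odd p → M p = 0)
    (hrec : ∀ k, Even k →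
      2 * M (k + 2) = (∑ s ∈ range (k / 2 + 1), M (2 * s) * M (k - 2 * s))
        - C ((k : ℚ) + 1) * M k) :
    ∀ p : ℕ, 1 ≤ p →
      (M (2 * p)).natDegree = p + 1 ∧
      (M (2 * p)).eval 0 = 0 ∧
      (M (2 * p)).eval 1 = 0 ∧
      (M (2 * p)).leadingCoeff = (catalan p : ℚ) / 2 ^ p := by
  suffices h : ∀ p : ℕ, (M (2*p)).natDegree = p+1 ∧ (M (2*p)).eval 0 = 0 ∧
      (M (2*p)).leadingCoeff = (catalan p : ℚ)/2^p ∧ (1 ≤ p → (M (2*p)).eval 1 = 0) by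
    intro p hp
    exact ⟨(h p).1, (h p).2.1, (h p).2.2.2 hp, (h p).2.2.1⟩
  intro p
  induction p using Nat.strong_induction_on with
  | _ p ih =>
  match p with
  | 0 => simp [h0]
  | (q+1) =>
    have hdeg : ∀ s ≤ q, (M (2*s)).natDegree = s+1 :=
      fun s hs => (ih s (Nat.lt_succ_of_le hs)).1
    have hlc : ∀ s ≤ q, (M (2*s)).leadingCoeff = (catalan s : ℚ)/2^s :=
      fun s hs => (ih s (Nat.lt_succ_of_le hs)).2.2.1
    have he0 : ∀ s ≤ q, (M (2*s)).eval 0 = 0 :=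
      fun s hs => (ih s (Nat.lt_succ_of_le hs)).2.1
    have he1 : ∀ s, 1 ≤ s → s ≤ q → (M (2*s)).eval 1 = 0 :=
      fun s h1 hs => (ih s (Nat.lt_succ_of_le hs)).2.2.2 h1
    have hcatpos : ∀ s : ℕ, (0:ℚ) < (catalan s : ℚ) := by
      intro s
      have h := succ_mul_catalan_eq_centralBinom s
      have h2 := s.centralBinom_pos
      have : 0 < catalan s := by
        rcases Nat.eq_zero_or_pos (catalan s) with h0 | h0
        · rw [h0, mul_zero] at h; omega
        · exact h0
      exact_mod_cast this
    have hne : ∀ s ≤ q, M (2*s) ≠ 0 := by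
      intro s hs
      rw [← leadingCoeff_ne_zero, hlc s hs]
      have := hcatpos s
      positivity
    -- the recurrence, rewritten
    have heq := hrec (2*q) ⟨q, (two_mul q)⟩
    rw [Nat.mul_div_cancel_left q (by norm_num : 0 < 2)] at heq
    have hsum : ∑ s ∈ range (q+1), M (2*s) * M (2*q - 2*s)
        = ∑ s ∈ range (q+1), M (2*s) * M (2*(q-s)) := by
      refine Finset.sum_congr rfl fun s hs => ?_
      simp only [mem_range] at hs
      congr 2
      omega
    rw [hsum] at heq
    set S : ℚ[X] := ∑ s ∈ range (q+1), M (2*s) * M (2*(q-s)) with hS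
    set R : ℚ[X] := S - C ((2*q : ℕ) + 1 : ℚ) * M (2*q) with hR
    have hM : M (2*(q+1)) = C (2⁻¹ : ℚ) * R := by
      have h2 : C (2⁻¹ : ℚ) * (2 : ℚ[X]) = 1 := by
        rw [show (2:ℚ[X]) = C 2 from (map_ofNat C 2).symm, ← C_mul]
        norm_num
      rw [show 2*(q+1) = 2*q+2 by ring, ← one_mul (M (2*q+2)), ← h2, mul_assoc, heq]
    -- degrees of the product terms
    have htd : ∀ s ∈ range (q+1), (M (2*s) * M (2*(q-s))).natDegree = q+2 := by
      intro s hs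
      simp only [mem_range] at hs
      rw [natDegree_mul (hne s (by omega)) (hne (q-s) (by omega)),
        hdeg s (by omega), hdeg (q-s) (by omega)]
      omega
    -- coefficient of S at q+2
    have hcS : S.coeff (q+2) = (catalan (q+1) : ℚ) / 2^q := by
      rw [hS, finset_sum_coeff]
      have key : ∀ s ∈ range (q+1), (M (2*s) * M (2*(q-s))).coeff (q+2)
          = (catalan s : ℚ) * (catalan (q-s)) / 2^q := by
        intro s hs
        have hs' := hs
        simp only [mem_range] at hs'
        rw [← htd s hs, coeff_natDegree, leadingCoeff_mul,
          hlc s (by omega), hlc (q-s) (by omega),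
          div_mul_div_comm, ← pow_add, show s + (q - s) = q from by omega]
      rw [Finset.sum_congr rfl key, ← Finset.sum_div]
      congr 1
      rw [catalan_succ]
      push_cast
      exact (Fin.sum_univ_eq_sum_range _ _).symm
    have hdS : S.natDegree ≤ q+2 := by
      apply natDegree_sum_le_of_forall_le
      intro s hs
      exact le_of_eq (htd s hs)
    -- R
    have hcR : R.coeff (q+2) = (catalan (q+1) : ℚ) / 2^q := by
      rw [hR, coeff_sub, hcS, coeff_eq_zero_of_natDegree_lt, sub_zero]
      calc (C ((2*q : ℕ) + 1 : ℚ) * M (2*q)).natDegree ≤ (M (2*q)).natDegree :=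
            natDegree_C_mul_le _ _
        _ < q + 2 := by rw [hdeg q le_rfl]; omega
    have hdR : R.natDegree ≤ q+2 := by
      rw [hR]
      refine le_trans (natDegree_sub_le _ _) ?_
      refine max_le hdS (le_trans (natDegree_C_mul_le _ _) ?_)
      rw [hdeg q le_rfl]; omega
    -- M(2(q+1))
    have hcM : (M (2*(q+1))).coeff (q+2) = (catalan (q+1) : ℚ) / 2^(q+1) := by
      rw [hM, coeff_C_mul, hcR, pow_succ]
      ring
    have hcMne : (M (2*(q+1))).coeff (q+2) ≠ 0 := by
      rw [hcM]
      have := hcatpos (q+1)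
      positivity
    have hdM : (M (2*(q+1))).natDegree = q+2 := by
      refine le_antisymm ?_ (le_natDegree_of_ne_zero hcMne)
      rw [hM]
      exact le_trans (natDegree_C_mul_le _ _) hdR
    refine ⟨hdM, ?_, ?_, ?_⟩
    · -- eval 0
      have hS0 : eval 0 S = 0 := by
        rw [hS, eval_finset_sum]
        refine Finset.sum_eq_zero fun s hs => ?_
        simp only [mem_range] at hs
        rw [eval_mul, he0 s (by omega), zero_mul]
      have hR0 : eval 0 R = 0 := by
        rw [hR, eval_sub, hS0, eval_mul, eval_C, he0 q le_rfl, mul_zero, sub_zero]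
      rw [hM, eval_mul, hR0, mul_zero]
    · -- leading coeff
      rw [leadingCoeff, hdM, hcM]
    · -- eval 1
      intro _
      rcases Nat.eq_zero_or_pos q with hq | hq
      · subst hq
        have hR1 : eval 1 R = 0 := by
          simp [hR, hS, h0]
        rw [hM, eval_mul, hR1, mul_zero]
      · have hS1 : eval 1 S = 0 := by
          rw [hS, eval_finset_sum]
          refine Finset.sum_eq_zero fun s hs => ?_
          simp only [mem_range] at hs
          rcases Nat.eq_zero_or_pos s with h | h
          · subst h
            rw [eval_mul]
            simp only [Nat.sub_zero]
            rw [he1 q hq le_rfl, mul_zero]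
          · rw [eval_mul, he1 s h (by omega), zero_mul]
        have hR1 : eval 1 R = 0 := by
          rw [hR, eval_sub, hS1, eval_mul, eval_C, he1 q hq le_rfl, mul_zero, sub_zero]
        rw [hM, eval_mul, hR1, mul_zero]
end

section
/- Define polynomials Q_p(α) ∈ ℚ[α] by Q_0 = 1, Q_p = 0 for odd p, and Q_{k+2}(α) = (k+1)·Q_k(α) + α·Σ_{s=0}^{k/2} Q_{2s}(α) Q_{k−2s}(α) for even k ≥ 0. Then for every positive integer N and every p ≥ 0, Q_{2p}(−N) = ((−2)^p / N) · Σ_{j=1}^N z_j^{2p}, where z_1, …, z_N are the zeros of the physicists' Hermite polynomial H_N. (This is the high-low temperature duality relating the high-temperature Gaussian β-ensemble moments, evaluated at α = −N, to the Hermite zeros.) -/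
open Polynomial Finset

lemma ph_succ (n : ℕ) : physHermite (n+1)
    = 2 * X * physHermite n - derivative (physHermite n) := rfl

lemma ph_deg_coeff : ∀ n : ℕ, (physHermite n).natDegree = n ∧ (physHermite n).coeff n = 2^n := by
  intro n
  induction n with
  | zero => simp [physHermite]
  | succ n ih =>
    obtain ⟨hd, hc⟩ := ih
    have hne : physHermite n ≠ 0 := by
      intro h
      rw [h, coeff_zero] at hc
      exact pow_ne_zero n two_ne_zero hc.symm
    have h2X : (2 * X : ℝ[X]) = C 2 * X := by rw [map_ofNat]
    have hdm : (2 * X * physHermite n).natDegree = n + 1 := by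
      rw [h2X, mul_assoc, natDegree_C_mul (by norm_num : (2:ℝ) ≠ 0),
        natDegree_mul X_ne_zero hne, natDegree_X, hd]
      omega
    have hdlt : (derivative (physHermite n)).natDegree < n + 1 :=
      lt_of_le_of_lt (natDegree_derivative_le _) (by omega)
    constructor
    · rw [ph_succ, natDegree_sub_eq_left_of_natDegree_lt (by rw [hdm]; exact hdlt), hdm]
    · rw [ph_succ, coeff_sub, h2X, mul_assoc, coeff_C_mul, coeff_X_mul, hc,
        coeff_eq_zero_of_natDegree_lt hdlt]
      ring

lemma ph_deriv : ∀ n : ℕ, derivative (physHermite (n+1))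
    = ((2*(n+1) : ℕ) : ℝ[X]) * physHermite n := by
  intro n
  induction n with
  | zero =>
    show derivative (2 * X * 1 - derivative 1) = _
    simp [physHermite]
  | succ n ih =>
    have e1 : derivative (2 * X * physHermite (n+1))
        = 2 * physHermite (n+1) + 2 * X * (((2*(n+1) : ℕ) : ℝ[X]) * physHermite n) := by
      rw [derivative_mul, ih]
      simp
    rw [ph_succ (n+1), derivative_sub, e1, ih, derivative_mul, derivative_natCast, ph_succ n]
    push_cast
    ring

lemma ph_ode (n : ℕ) : derivative (derivative (physHermite (n+1)))
    = 2 * X * derivative (physHermite (n+1)) - ((2*(n+1) : ℕ) : ℝ[X]) * physHermite (n+1) := by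
  rw [ph_deriv n, derivative_mul, derivative_natCast, ph_succ n]
  ring

lemma ph_next : ∀ n : ℕ, (physHermite (n+1)).coeff n = 0 := by
  intro n
  induction n with
  | zero =>
    show (2 * X * 1 - derivative 1 : ℝ[X]).coeff 0 = 0
    simp [physHermite]
  | succ n ih =>
    have hd := (ph_deg_coeff (n+1)).1
    have h2X : (2 * X : ℝ[X]) = C 2 * X := by rw [map_ofNat]
    rw [ph_succ, coeff_sub, h2X, mul_assoc, coeff_C_mul, coeff_X_mul, ih, coeff_derivative,
      coeff_eq_zero_of_natDegree_lt (by omega)]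
    ring


lemma derivative_fin_prod {ι : Type*} [DecidableEq ι] (s : Finset ι) (f : ι → ℝ) :
    derivative (∏ i ∈ s, (X - C (f i))) = ∑ i ∈ s, ∏ j ∈ s.erase i, (X - C (f j)) := by
  induction s using Finset.induction_on with
  | empty => simp
  | @insert a s ha ih =>
    rw [Finset.prod_insert ha, derivative_mul, ih, Finset.sum_insert ha,
      Finset.erase_insert ha]
    simp only [derivative_sub, derivative_X, derivative_C, sub_zero, one_mul]
    rw [Finset.mul_sum]
    have he : ∀ i ∈ s, (X - C (f a)) * ∏ j ∈ s.erase i, (X - C (f j))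
        = ∏ j ∈ (insert a s).erase i, (X - C (f j)) := by
      intro i hi
      rw [Finset.erase_insert_of_ne (by rintro rfl; exact ha hi : a ≠ i),
        Finset.prod_insert (fun h => ha (Finset.mem_of_mem_erase h))]
    rw [Finset.sum_congr rfl he, add_comm]


lemma elec_identity {N : ℕ} (z : Fin N → ℝ) (hzinj : Function.Injective z) (W : ℝ[X])
    (hode : derivative (derivative (∏ j : Fin N, (X - C (z j))))
    = 2 * X * derivative (∏ j : Fin N, (X - C (z j)))
      - W * ∏ j : Fin N, (X - C (z j))) :
    ∀ j, z j = ∑ l ∈ univ.erase j, (z j - z l)⁻¹ := by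
  classical
  set P : ℝ[X] := ∏ j : Fin N, (X - C (z j)) with hPdef
  set d : Fin N → ℝ := fun j => ∏ l ∈ univ.erase j, (z j - z l) with hddef
  set e : Fin N → Fin N → ℝ := fun j l => ∏ k ∈ (univ.erase j).erase l, (z j - z k) with hedef
  have hzne : ∀ (j l : Fin N), l ≠ j → z j - z l ≠ 0 :=
    fun j l h => sub_ne_zero.mpr (fun hh => h (hzinj hh.symm))
  have hdne : ∀ j, d j ≠ 0 := by
    intro j
    exact Finset.prod_ne_zero_iff.mpr fun l hl => hzne j l (Finset.ne_of_mem_erase hl)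
  have hPz : ∀ j, P.eval (z j) = 0 := by
    intro j
    rw [hPdef, eval_prod]
    exact Finset.prod_eq_zero (mem_univ j) (by simp)
  have hP' : ∀ j, (derivative P).eval (z j) = d j := by
    intro j
    rw [hPdef, derivative_fin_prod, eval_finset_sum]
    rw [Finset.sum_eq_single j]
    · rw [eval_prod]; simp [hddef]
    · intro i _ hij
      rw [eval_prod]
      refine Finset.prod_eq_zero (Finset.mem_erase.mpr ⟨hij.symm, mem_univ _⟩) (by simp)
    · simp
  have hP'' : ∀ j, (derivative (derivative P)).eval (z j) = 2 * ∑ l ∈ univ.erase j, e j l := by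
    intro j
    rw [hPdef, derivative_fin_prod, map_sum]
    have hterm : ∀ i : Fin N, derivative (∏ k ∈ univ.erase i, (X - C (z k)))
        = ∑ l ∈ univ.erase i, ∏ k ∈ (univ.erase i).erase l, (X - C (z k)) :=
      fun i => derivative_fin_prod _ _
    rw [Finset.sum_congr rfl fun i _ => hterm i, eval_finset_sum,
      ← Finset.add_sum_erase _ _ (mem_univ j)]
    have h1 : eval (z j) (∑ l ∈ univ.erase j, ∏ k ∈ (univ.erase j).erase l, (X - C (z k)))
        = ∑ l ∈ univ.erase j, e j l := by
      rw [eval_finset_sum]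
      exact Finset.sum_congr rfl fun l _ => by rw [eval_prod]; simp [hedef]
    have h2 : ∀ i ∈ univ.erase j,
        eval (z j) (∑ l ∈ univ.erase i, ∏ k ∈ (univ.erase i).erase l, (X - C (z k))) = e j i := by
      intro i hi
      have hij : i ≠ j := Finset.ne_of_mem_erase hi
      rw [eval_finset_sum, Finset.sum_eq_single j]
      · rw [eval_prod, Finset.erase_right_comm]
        simp [hedef]
      · intro l hl hlj
        rw [eval_prod]
        refine Finset.prod_eq_zero (Finset.mem_erase.mpr ⟨hlj.symm,
          Finset.mem_erase.mpr ⟨hij.symm, mem_univ _⟩⟩) (by simp)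
      · intro h
        exact absurd (Finset.mem_erase.mpr ⟨hij.symm, mem_univ _⟩) h
    rw [h1, Finset.sum_congr rfl h2]
    ring
  have helec1 : ∀ j, ∑ l ∈ univ.erase j, e j l = z j * d j := by
    intro j
    have := congrArg (eval (z j)) hode
    simp only [eval_sub, eval_mul, eval_ofNat, eval_X, eval_natCast, hP', hPz, hP'', mul_zero,
      sub_zero] at this
    linarith [this]
  have hee : ∀ j l, l ∈ univ.erase j → e j l = d j * (z j - z l)⁻¹ := by
    intro j l hl
    have h := Finset.mul_prod_erase (univ.erase j) (fun k => z j - z k) hl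
    have hne := hzne j l (Finset.ne_of_mem_erase hl)
    rw [hddef, hedef]
    field_simp
    linear_combination h
  intro j
  have h1 : d j * ∑ l ∈ univ.erase j, (z j - z l)⁻¹ = z j * d j := by
    rw [Finset.mul_sum, ← helec1 j]
    exact Finset.sum_congr rfl fun l hl => (hee j l hl).symm
  have := mul_left_cancel₀ (hdne j) (h1.trans (by ring))
  linarith [this]

lemma psum_rec {N : ℕ} (z : Fin N → ℝ) (hzinj : Function.Injective z)
    (helec : ∀ j, z j = ∑ l ∈ univ.erase j, (z j - z l)⁻¹) (m : ℕ) :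
    2 * (∑ j, z j ^ (m+2)) = (∑ a ∈ range (m+1), (∑ j, z j ^ a) * (∑ j, z j ^ (m-a)))
      - (m+1) * ∑ j, z j ^ m := by
  classical
  set S : ℕ → ℝ := fun k => ∑ j, z j ^ k with hSdef
  set F : Fin N → Fin N → ℝ := fun j l => if j = l then 0 else z j ^ (m+1) * (z j - z l)⁻¹
    with hFdef
  set G : Fin N → Fin N → ℝ := fun j l => ∑ a ∈ range (m+1), z j ^ a * z l ^ (m - a) with hGdef
  have hzne : ∀ (j l : Fin N), j ≠ l → z j - z l ≠ 0 :=
    fun j l h => sub_ne_zero.mpr (fun hh => h (hzinj hh))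
  have hSm2 : S (m+2) = ∑ j, ∑ l, F j l := by
    refine Finset.sum_congr rfl fun j _ => ?_
    have h1 : ∑ l, F j l = ∑ l ∈ univ.erase j, F j l :=
      (Finset.sum_erase _ (by simp [hFdef])).symm
    have h2 : ∑ l ∈ univ.erase j, F j l = ∑ l ∈ univ.erase j, z j ^ (m+1) * (z j - z l)⁻¹ :=
      Finset.sum_congr rfl fun l hl => by
        rw [hFdef]
        exact if_neg (Finset.ne_of_mem_erase hl).symm
    rw [h1, h2, ← Finset.mul_sum, ← helec j]
    ring
  have hpt : ∀ j l : Fin N, F j l + F l j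
      = G j l - (if j = l then ((m:ℝ)+1) * z j ^ m else 0) := by
    intro j l
    by_cases hjl : j = l
    · subst hjl
      simp only [hFdef, hGdef, if_pos rfl]
      have : ∀ a ∈ range (m+1), z j ^ a * z j ^ (m - a) = z j ^ m := by
        intro a ha
        have := Finset.mem_range.mp ha
        rw [← pow_add]
        congr 1
        omega
      rw [Finset.sum_congr rfl this, Finset.sum_const, Finset.card_range]
      simp
    · have hne := hzne j l hjl
      have hne' := hzne l j (Ne.symm hjl)
      have hg := geom_sum₂_mul (z j) (z l) (m+1)
      simp only [hFdef, hGdef, if_neg hjl, if_neg (Ne.symm hjl), sub_zero]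
      have hinv : (z l - z j)⁻¹ = -(z j - z l)⁻¹ := by
        rw [← neg_sub, inv_neg]
      rw [hinv]
      have : z j ^ (m+1) * (z j - z l)⁻¹ + z l ^ (m+1) * -(z j - z l)⁻¹
          = (z j ^ (m+1) - z l ^ (m+1)) * (z j - z l)⁻¹ := by ring
      rw [this, ← hg, mul_assoc, mul_inv_cancel₀ hne, mul_one]
      simp [Nat.add_sub_cancel]
  have hGsum : ∑ j, ∑ l, G j l = ∑ a ∈ range (m+1), S a * S (m - a) := by
    have h1 : ∀ j : Fin N, ∑ l, G j l = ∑ a ∈ range (m+1), z j ^ a * S (m - a) := fun j => by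
      rw [hGdef, Finset.sum_comm]
      exact Finset.sum_congr rfl fun a _ => by rw [← Finset.mul_sum]
    rw [Finset.sum_congr rfl fun j _ => h1 j, Finset.sum_comm]
    exact Finset.sum_congr rfl fun a _ => by rw [← Finset.sum_mul]
  have hdiag : ∑ j : Fin N, ∑ l : Fin N, (if j = l then ((m:ℝ)+1) * z j ^ m else 0)
      = ((m:ℝ)+1) * S m := by
    have h1 : ∀ j : Fin N, ∑ l : Fin N, (if j = l then ((m:ℝ)+1) * z j ^ m else 0)
        = ((m:ℝ)+1) * z j ^ m := fun j => by
      rw [Finset.sum_ite_eq]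
      simp
    rw [Finset.sum_congr rfl fun j _ => h1 j, hSdef, Finset.mul_sum]
  have h2T : 2 * S (m+2) = ∑ j, ∑ l, (F j l + F l j) := by
    simp only [Finset.sum_add_distrib]
    rw [← hSm2]
    have : ∑ j : Fin N, ∑ l : Fin N, F l j = ∑ j : Fin N, ∑ l : Fin N, F j l :=
      Finset.sum_comm
    rw [this, ← hSm2]
    ring
  calc 2 * S (m+2) = ∑ j, ∑ l, (F j l + F l j) := h2T
    _ = ∑ j, ∑ l, (G j l - (if j = l then ((m:ℝ)+1) * z j ^ m else 0)) := by
        exact Finset.sum_congr rfl fun j _ => Finset.sum_congr rfl fun l _ => hpt j l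
    _ = (∑ a ∈ range (m+1), S a * S (m - a)) - ((m:ℝ)+1) * S m := by
        simp only [Finset.sum_sub_distrib]
        rw [hGsum, hdiag]

/-- High-low temperature duality for the Gaussian β-ensemble moments: with
`Q_p(α) ∈ ℚ[α]` defined by `Q_0 = 1`, `Q_p = 0` for odd `p`, and
`Q_{k+2} = (k+1) Q_k + α ∑_{s=0}^{k/2} Q_{2s} Q_{k-2s}` for even `k`, one has
`Q_{2p}(-N) = ((-2)^p / N) ∑_{j=1}^N z_j^{2p}`, where the `z_j` are the zeros of the
physicists' Hermite polynomial `H_N`. -/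
theorem stmt_8 (Q : ℕ → Polynomial ℚ)
    (h0 : Q 0 = 1)
    (hodd : ∀ p, Odd p → Q p = 0)
    (hrec : ∀ k, Even k →
      Q (k + 2) = C ((k : ℚ) + 1) * Q k +
        X * ∑ s ∈ range (k / 2 + 1), Q (2 * s) * Q (k - 2 * s))
    (N : ℕ) (hN : 0 < N) (z : Fin N → ℝ) (hmono : StrictMono z)
    (hzero : ∀ j, (physHermite N).eval (z j) = 0) (p : ℕ) :
    (Polynomial.aeval (-(N : ℝ)) (Q (2 * p)) : ℝ)
      = ((-2 : ℝ) ^ p / N) * ∑ j, z j ^ (2 * p) := by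
  classical
  obtain ⟨n, rfl⟩ : ∃ n, N = n + 1 := ⟨N - 1, by omega⟩
  have hzinj := hmono.injective
  set P : ℝ[X] := ∏ j : Fin (n+1), (X - C (z j)) with hPdef
  have hPmonic : P.Monic := monic_prod_of_monic _ _ (fun j _ => monic_X_sub_C (z j))
  have hPdeg : P.natDegree = (n+1) := by
    rw [hPdef, natDegree_prod _ _ (fun j _ => X_sub_C_ne_zero (z j))]
    simp
  have hPz : ∀ j, P.eval (z j) = 0 := by
    intro j
    rw [hPdef, eval_prod]
    exact Finset.prod_eq_zero (mem_univ j) (by simp)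
  -- factorization
  have hHP : physHermite (n+1) = C ((2:ℝ)^(n+1)) * P := by
    rw [← sub_eq_zero]
    by_contra hD
    have hcN : (physHermite (n+1) - C ((2:ℝ)^(n+1)) * P).coeff (n+1) = 0 := by
      rw [coeff_sub, (ph_deg_coeff (n+1)).2, coeff_C_mul]
      rw [show P.coeff (n+1) = 1 by simpa [hPdeg] using hPmonic.coeff_natDegree]
      ring
    have hle : (physHermite (n+1) - C ((2:ℝ)^(n+1)) * P).natDegree ≤ (n+1) := by
      refine le_trans (natDegree_sub_le _ _) ?_
      rw [(ph_deg_coeff (n+1)).1, natDegree_C_mul (by positivity : ((2:ℝ)^(n+1)) ≠ 0), hPdeg]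
      simp
    have hDdeg : (physHermite (n+1) - C ((2:ℝ)^(n+1)) * P).natDegree < (n+1) := by
      rcases lt_or_eq_of_le hle with h | h
      · exact h
      · exfalso
        apply leadingCoeff_ne_zero.mpr hD
        rw [leadingCoeff, h]
        exact hcN
    have hDz : ∀ j, (physHermite (n+1) - C ((2:ℝ)^(n+1)) * P).eval (z j) = 0 := by
      intro j
      simp [hzero j, hPz j]
    exact hD (eq_zero_of_natDegree_lt_card_of_eval_eq_zero _ hzinj hDz
      (by simpa using hDdeg))
  -- ODE for P
  have hCne : (C ((2:ℝ)^(n+1)) : ℝ[X]) ≠ 0 := by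
    simp only [ne_eq, C_eq_zero]
    positivity
  have hodeP : derivative (derivative P) = 2 * X * derivative P - ((2*(n+1) : ℕ) : ℝ[X]) * P := by
    have h := ph_ode n
    rw [hHP, derivative_C_mul, derivative_C_mul] at h
    apply mul_left_cancel₀ hCne
    rw [h]
    ring
  have helec : ∀ j, z j = ∑ l ∈ univ.erase j, (z j - z l)⁻¹ :=
    elec_identity z hzinj _ hodeP
  -- power sums
  set S : ℕ → ℝ := fun k => ∑ j, z j ^ k with hSdef
  have hrecS : ∀ m, 2 * S (m+2) = (∑ a ∈ range (m+1), S a * S (m-a)) - (m+1) * S m :=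
    psum_rec z hzinj helec
  have hS0 : S 0 = (n+1) := by simp [hSdef]
  have hS1 : S 1 = 0 := by
    have hnext := ph_next n
    rw [hHP, coeff_C_mul] at hnext
    have h1 : P.coeff n = -∑ j, z j := by
      have h2 := prod_X_sub_C_nextCoeff (s := (univ : Finset (Fin (n+1)))) z
      rw [nextCoeff_of_natDegree_pos (by omega : 0 < P.natDegree), hPdeg] at h2
      simpa using h2
    rw [h1] at hnext
    have h3 : ∑ j, z j = 0 := by
      have := mul_eq_zero.mp hnext
      rcases this with h | h
      · exact absurd h (by positivity)
      · linarith [h]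
    simpa [hSdef] using h3
  have hoddS : ∀ m, Odd m → S m = 0 := by
    intro m
    induction m using Nat.strong_induction_on with
    | _ m ihm =>
      intro hm
      obtain ⟨t, rfl⟩ := hm
      match t with
      | 0 => exact hS1
      | t + 1 =>
        have hrw : 2 * (t + 1) + 1 = (2 * t + 1) + 2 := by ring
        rw [hrw]
        have h := hrecS (2 * t + 1)
        have hSodd : S (2 * t + 1) = 0 :=
          ihm (2 * t + 1) (by omega) ⟨t, by ring⟩
        have hterm : ∀ a ∈ range (2 * t + 1 + 1), S a * S (2 * t + 1 - a) = 0 := by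
          intro a ha
          have ha' := Finset.mem_range.mp ha
          rcases Nat.even_or_odd a with he | ho
          · have : Odd (2 * t + 1 - a) := by
              rw [Nat.odd_iff] at *
              rw [Nat.even_iff] at he
              omega
            rw [ihm (2 * t + 1 - a) (by omega) this, mul_zero]
          · rw [ihm a (by omega) ho, zero_mul]
        rw [Finset.sum_eq_zero hterm, hSodd] at h
        linarith [h]
  have hevenS : ∀ q, 2 * S (2*q+2) = (∑ s ∈ range (q+1), S (2*s) * S (2*q - 2*s))
      - (2*(q:ℝ)+1) * S (2*q) := by
    intro q
    have h := hrecS (2 * q)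
    have hri : ∑ a ∈ range (2*q+1), S a * S (2*q - a)
        = ∑ s ∈ range (q+1), S (2*s) * S (2*q - 2*s) := by
      have himg : ∑ a ∈ (range (q+1)).image (fun s => 2 * s), S a * S (2*q - a)
          = ∑ s ∈ range (q+1), S (2*s) * S (2*q - 2*s) :=
        Finset.sum_image (fun x _ y _ h => by omega)
      rw [← himg]
      refine (Finset.sum_subset ?_ ?_).symm
      · intro x hx
        obtain ⟨s, hs, rfl⟩ := Finset.mem_image.mp hx
        have := Finset.mem_range.mp hs
        exact Finset.mem_range.mpr (by omega)
      · intro x hx hnx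
        have hxr := Finset.mem_range.mp hx
        have hxo : Odd x := by
          rcases Nat.even_or_odd x with he | ho
          · exfalso
            obtain ⟨c, rfl⟩ := he
            exact hnx (Finset.mem_image.mpr ⟨c, Finset.mem_range.mpr (by omega), by omega⟩)
          · exact ho
        rw [hoddS x hxo, zero_mul]
    rw [hri] at h
    push_cast at h
    linarith [h]
  have hNne : (((n+1):ℝ)) ≠ 0 := by positivity
  -- main induction
  induction p using Nat.strong_induction_on with
  | _ p ih =>
    match p with
    | 0 =>
      rw [h0, map_one]
      simp only [Nat.mul_zero, pow_zero]
      rw [Finset.sum_const, Finset.card_univ, Fintype.card_fin, nsmul_eq_mul, mul_one]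
      push_cast
      field_simp
    | p + 1 =>
      have hq := hrec (2*p) (even_two_mul p)
      have h2 : 2*p/2 = p := by omega
      rw [h2] at hq
      have hidx : 2*(p+1) = 2*p + 2 := by ring
      rw [hidx, hq]
      simp only [map_add, map_mul, aeval_C, aeval_X, map_sum, map_natCast, map_one]
      have hsum : ∀ x ∈ Finset.range (p+1),
          (Polynomial.aeval (-((n:ℝ)+1))) (Q (2*x)) * (Polynomial.aeval (-((n:ℝ)+1))) (Q (2*p - 2*x))
          = (-2:ℝ)^p / (((n:ℝ)+1)*((n:ℝ)+1)) * (S (2*x) * S (2*p - 2*x)) := by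
        intro x hx
        have hxle := Finset.mem_range.mp hx
        have e1 : 2*p - 2*x = 2*(p - x) := by omega
        have hpow : (-2:ℝ)^x * (-2:ℝ)^(p-x) = (-2)^p := by
          rw [← pow_add]
          congr 1
          omega
        rw [e1]
        have i1 := ih x (by omega)
        have i2 := ih (p - x) (by omega)
        push_cast at i1 i2 ⊢
        rw [i1, i2, show (∑ j, z j ^ (2*x)) = S (2*x) from rfl,
          show (∑ j, z j ^ (2*(p-x))) = S (2*(p-x)) from rfl]
        field_simp
        linear_combination S (2*x) * S (2*(p-x)) * hpow
      have i3 := ih p (by omega)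
      push_cast at i3 ⊢
      rw [i3, Finset.sum_congr rfl hsum, ← Finset.mul_sum,
        show (∑ j, z j ^ (2*p)) = S (2*p) from rfl,
        show (∑ j, z j ^ (2*p+2)) = S (2*p+2) from rfl]
      have hE := hevenS p
      have key : S (2*p+2) = ((∑ s ∈ range (p+1), S (2*s) * S (2*p - 2*s))
          - (2*(p:ℝ)+1) * S (2*p)) / 2 := by linarith [hE]
      rw [key]
      field_simp
      ring
end

section
/- Let N be a positive integer and a > 0 real. Let z_1, …, z_N be the zeros of the generalized Laguerre polynomial L_N^{(a−1)} and define the power sums m_p := z_1^p + ⋯ + z_N^p for integers p ≥ 0. Then m_0 = N and for every integer k ≥ 0 the recurrence m_{k+1} = Σ_{s=0}^{k} m_s m_{k−s} − (k + 1 − a)·m_k holds. -/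
/-!
The polynomial `L = L_N^{(a-1)}` satisfies `x L'' + (a - x) L' + N L = 0`. Its zeros are simple, so
`L''(z_j) = 2 L'(z_j) ∑_{i ≠ j} (z_j - z_i)⁻¹` with `L'(z_j) ≠ 0`, and the differential equation at
`z_j` gives Stieltjes' relations `2 z_j ∑_{i ≠ j} (z_j - z_i)⁻¹ = z_j - a`. Multiply by `z_j ^ k` and
sum over `j`: symmetrising in `(i, j)` turns `z_j^{k+1} / (z_j - z_i) + z_i^{k+1} / (z_i - z_j)` into
`∑_{s ≤ k} z_j^s z_i^{k-s}`, whose double sum is `∑_s m_s m_{k-s}` minus the diagonal `(k + 1) m_k`.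
-/

open Polynomial Finset

/-- The generalized Laguerre polynomial `L_N^{(a-1)}(x) =
∑_{k=0}^N (-1)^k (Γ(N+a) / (Γ(k+a) (N-k)! k!)) x^k`. -/
noncomputable def laguerre (N : ℕ) (a : ℝ) : Polynomial ℝ :=
  ∑ k ∈ Finset.range (N + 1),
    Polynomial.C ((-1 : ℝ) ^ k *
      (Real.Gamma ((N : ℝ) + a) /
        (Real.Gamma ((k : ℝ) + a) * ((N - k).factorial : ℝ) * (k.factorial : ℝ)))) *
      Polynomial.X ^ k

section Nodal

open Lagrange

variable {F ι : Type*} [Field F] {s : Finset ι} {v : ι → F}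

theorem eq_C_mul_nodal_of_eval_eq_zero (hvs : Set.InjOn v s) {p : F[X]}
    (hp : p.natDegree ≤ #s) (hroots : ∀ i ∈ s, p.eval (v i) = 0) :
    p = C (p.coeff #s) * nodal s v := by
  refine eq_of_degree_sub_lt_of_eval_index_eq s hvs ?_ fun i hi => ?_
  · refine (degree_lt_iff_coeff_zero _ #s).2 fun n hn => ?_
    rw [coeff_sub, coeff_C_mul]
    rcases hn.eq_or_lt with heq | hlt
    · have hmonic := (nodal_monic (s := s) (v := v)).coeff_natDegree
      rw [natDegree_nodal] at hmonic
      rw [← heq, hmonic, mul_one, sub_self]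
    · rw [coeff_eq_zero_of_natDegree_lt (hp.trans_lt hlt),
        coeff_eq_zero_of_natDegree_lt (natDegree_nodal.trans_lt hlt), mul_zero, sub_zero]
  · rw [hroots i hi, eval_mul, eval_nodal_at_node hi, mul_zero]

variable [DecidableEq ι]

theorem eval_derivative_nodal_of_forall_ne {x : F} (hx : ∀ i ∈ s, x ≠ v i) :
    eval x (derivative (nodal s v)) = eval x (nodal s v) * ∑ i ∈ s, (x - v i)⁻¹ := by
  rw [derivative_nodal, eval_finsetSum, mul_sum]
  refine sum_congr rfl fun i hi => ?_
  rw [nodal_eq_mul_nodal_erase hi, eval_mul, eval_sub, eval_X, eval_C,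
    mul_comm (x - v i), mul_assoc, mul_inv_cancel₀ (sub_ne_zero.2 (hx i hi)), mul_one]

theorem eval_derivative_derivative_nodal_eval_node (hvs : Set.InjOn v s) {j : ι} (hj : j ∈ s) :
    eval (v j) (derivative (derivative (nodal s v)))
      = 2 * eval (v j) (derivative (nodal s v)) * ∑ i ∈ s.erase j, (v j - v i)⁻¹ := by
  have hne : ∀ i ∈ s.erase j, v j ≠ v i := fun i hi h =>
    (mem_erase.1 hi).1 (hvs (mem_erase.1 hi).2 hj h.symm)
  rw [eval_nodal_derivative_eval_node_eq hj, mul_assoc, ← eval_derivative_nodal_of_forall_ne hne,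
    nodal_eq_mul_nodal_erase hj]
  simp only [derivative_mul, derivative_add, derivative_sub, derivative_X, derivative_C,
    eval_add, eval_mul, eval_sub, eval_X, eval_C, derivative_one, derivative_zero, eval_zero, eval_one]
  ring

end Nodal

section PowerSums

variable {K ι : Type*} [Field K] [Fintype ι]

theorem pow_succ_mul_inv_sub_add_pow_succ_mul_inv_sub {x y : K} (h : x ≠ y) (k : ℕ) :
    x ^ (k + 1) * (x - y)⁻¹ + y ^ (k + 1) * (y - x)⁻¹
      = ∑ s ∈ range (k + 1), x ^ s * y ^ (k - s) := by
  have := (Commute.all x y).geom_sum₂ h (k + 1)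
  simp only [Nat.add_sub_cancel] at this
  rw [this, ← neg_sub x y, inv_neg, div_eq_mul_inv]
  ring

/-- The diagonal terms `i = j` of the double sum vanish because `(0 : K)⁻¹ = 0`. -/
theorem two_mul_sum_sum_pow_succ_mul_inv_sub {z : ι → K} (hz : Function.Injective z) (k : ℕ) :
    2 * ∑ j, ∑ i, z j ^ (k + 1) * (z j - z i)⁻¹
      = ∑ s ∈ range (k + 1), (∑ j, z j ^ s) * ∑ j, z j ^ (k - s)
        - ((k : K) + 1) * ∑ j, z j ^ k := by
  classical
  have hpair : ∀ j i, z j ^ (k + 1) * (z j - z i)⁻¹ + z i ^ (k + 1) * (z i - z j)⁻¹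
      = ∑ s ∈ range (k + 1), z j ^ s * z i ^ (k - s)
        - if i = j then ((k : K) + 1) * z j ^ k else 0 := by
    intro j i
    by_cases hij : i = j
    · subst hij
      have hdiag : ∀ s ∈ range (k + 1), z i ^ s * z i ^ (k - s) = z i ^ k := fun s hs => by
        rw [← pow_add, Nat.add_sub_cancel' (Nat.lt_succ_iff.1 (mem_range.1 hs))]
      simp [sum_congr rfl hdiag]
    · rw [if_neg hij, sub_zero]
      exact pow_succ_mul_inv_sub_add_pow_succ_mul_inv_sub (hz.ne (Ne.symm hij)) k
  calc 2 * ∑ j, ∑ i, z j ^ (k + 1) * (z j - z i)⁻¹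
      = ∑ j, ∑ i, (z j ^ (k + 1) * (z j - z i)⁻¹ + z i ^ (k + 1) * (z i - z j)⁻¹) := by
        conv_lhs => rw [two_mul]; arg 2; rw [sum_comm]
        simp only [← sum_add_distrib]
    _ = _ := by
        simp only [hpair, sum_sub_distrib, sum_ite_eq', mem_univ, if_true, ← mul_sum]
        congr 1
        simp only [sum_mul_sum]
        exact (sum_congr rfl fun _ _ => sum_comm).trans sum_comm

end PowerSums

section Laguerre

variable {N : ℕ} {a : ℝ}

noncomputable def laguerreCoeff (N : ℕ) (a : ℝ) (k : ℕ) : ℝ :=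
  (-1 : ℝ) ^ k * (Real.Gamma ((N : ℝ) + a) /
    (Real.Gamma ((k : ℝ) + a) * ((N - k).factorial : ℝ) * (k.factorial : ℝ)))

theorem coeff_laguerre (n : ℕ) :
    (laguerre N a).coeff n = if n ≤ N then laguerreCoeff N a n else 0 := by
  simp only [laguerre, finsetSum_coeff, coeff_C_mul, coeff_X_pow, mul_ite, mul_one, mul_zero,
    sum_ite_eq, mem_range, Nat.lt_succ_iff, laguerreCoeff]

theorem natDegree_laguerre_le : (laguerre N a).natDegree ≤ N :=
  natDegree_le_iff_coeff_eq_zero.2 fun n hn => by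
    rw [coeff_laguerre, if_neg (not_le.2 hn)]

theorem coeff_laguerre_self_ne_zero (ha : 0 < a) : (laguerre N a).coeff N ≠ 0 := by
  have hΓ : Real.Gamma ((N : ℝ) + a) ≠ 0 := (Real.Gamma_pos_of_pos (by positivity)).ne'
  rw [coeff_laguerre, if_pos le_rfl, laguerreCoeff]
  exact mul_ne_zero (pow_ne_zero _ (by norm_num)) (div_ne_zero hΓ (by positivity))

theorem laguerreCoeff_succ (ha : 0 < a) {n : ℕ} (hn : n < N) :
    ((n : ℝ) + 1) * ((n : ℝ) + a) * laguerreCoeff N a (n + 1)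
      = ((n : ℝ) - N) * laguerreCoeff N a n := by
  have hΓ : Real.Gamma ((n : ℝ) + a) ≠ 0 := (Real.Gamma_pos_of_pos (by positivity)).ne'
  have hΓ_succ : Real.Gamma (((n + 1 : ℕ) : ℝ) + a) = ((n : ℝ) + a) * Real.Gamma ((n : ℝ) + a) := by
    rw [Nat.cast_succ, add_right_comm, Real.Gamma_add_one (by positivity)]
  have hfac : ((N - n).factorial : ℝ) = ((N : ℝ) - n) * ((N - (n + 1)).factorial : ℝ) := by
    rw [show N - n = N - (n + 1) + 1 by omega, Nat.factorial_succ, Nat.cast_mul,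
      Nat.cast_add_one, Nat.cast_sub (by omega : n + 1 ≤ N), Nat.cast_add_one]
    ring
  have hNn : (N : ℝ) - n ≠ 0 := sub_ne_zero.2 (by exact_mod_cast hn.ne')
  unfold laguerreCoeff
  rw [hΓ_succ, hfac, Nat.factorial_succ, Nat.cast_mul, Nat.cast_add_one, pow_succ]
  field_simp
  ring

theorem coeff_laguerre_succ (ha : 0 < a) (n : ℕ) :
    ((n : ℝ) + 1) * ((n : ℝ) + a) * (laguerre N a).coeff (n + 1)
      = ((n : ℝ) - N) * (laguerre N a).coeff n := by
  rw [coeff_laguerre, coeff_laguerre]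
  rcases lt_trichotomy n N with h | rfl | h
  · rw [if_pos (Nat.succ_le_of_lt h), if_pos h.le]
    exact laguerreCoeff_succ ha h
  · rw [if_neg (by omega), sub_self, mul_zero, zero_mul]
  · rw [if_neg (by omega), if_neg (by omega), mul_zero, mul_zero]

theorem laguerre_ode (ha : 0 < a) :
    X * derivative (derivative (laguerre N a)) + (C a - X) * derivative (laguerre N a)
      + C (N : ℝ) * laguerre N a = 0 := by
  ext (_ | n)
  · have h := coeff_laguerre_succ (N := N) ha 0
    simp only [coeff_add, sub_mul, coeff_sub, mul_coeff_zero, coeff_C_zero, coeff_X_zero,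
      coeff_derivative, coeff_zero] at h ⊢
    push_cast at h ⊢
    linear_combination h
  · have h := coeff_laguerre_succ (N := N) ha (n + 1)
    simp only [coeff_add, sub_mul, coeff_sub, coeff_C_mul, coeff_X_mul, coeff_derivative,
      coeff_zero] at h ⊢
    push_cast at h ⊢
    linear_combination h

end Laguerre

open Lagrange in
/-- The term `i = j` of the sum is `(0 : ℝ)⁻¹ = 0`. -/
theorem two_mul_mul_sum_inv_sub_of_laguerre_roots {N : ℕ} {a : ℝ} (ha : 0 < a) {z : Fin N → ℝ}
    (hz : Function.Injective z) (hroots : ∀ j, (laguerre N a).eval (z j) = 0) (j : Fin N) :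
    2 * z j * ∑ i, (z j - z i)⁻¹ = z j - a := by
  have hinj : Set.InjOn z (univ : Finset (Fin N)) := hz.injOn
  have hcard : #(univ : Finset (Fin N)) = N := card_fin N
  have hL : laguerre N a = C ((laguerre N a).coeff N) * nodal univ z := by
    simpa only [hcard] using eq_C_mul_nodal_of_eval_eq_zero hinj
      (natDegree_laguerre_le.trans hcard.ge) fun i _ => hroots i
  have hQ' : eval (z j) (derivative (nodal univ z)) ≠ 0 := by
    rw [eval_nodal_derivative_eval_node_eq (mem_univ j)]
    exact eval_nodal_not_at_node fun i hi => hz.ne (mem_erase.1 hi).1.symm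
  have hdiag : ∑ i ∈ univ.erase j, (z j - z i)⁻¹ = ∑ i, (z j - z i)⁻¹ :=
    sum_erase _ (by rw [sub_self, inv_zero])
  have hode := congrArg (eval (z j)) (laguerre_ode (N := N) ha)
  rw [hL] at hode
  simp only [derivative_C_mul, eval_add, eval_mul, eval_sub, eval_C, eval_X, eval_zero,
    eval_nodal_at_node (mem_univ j), eval_derivative_derivative_nodal_eval_node hinj (mem_univ j),
    hdiag] at hode
  refine mul_left_cancel₀ (mul_ne_zero (coeff_laguerre_self_ne_zero (N := N) ha) hQ') ?_
  linear_combination hode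

theorem stmt_12_general (N : ℕ) (a : ℝ) (ha : 0 < a)
    (z : Fin N → ℝ) (hmono : StrictMono z)
    (hzero : ∀ j, (laguerre N a).eval (z j) = 0)
    (m : ℕ → ℝ) (hm : ∀ p, m p = ∑ j, z j ^ p) :
    m 0 = N ∧
      ∀ k : ℕ, m (k + 1) = (∑ s ∈ range (k + 1), m s * m (k - s))
        - ((k : ℝ) + 1 - a) * m k := by
  refine ⟨by simp [hm], fun k => ?_⟩
  have hstieltjes := two_mul_mul_sum_inv_sub_of_laguerre_roots ha hmono.injective hzero
  have hsym := two_mul_sum_sum_pow_succ_mul_inv_sub hmono.injective k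
  simp only [← hm] at hsym
  have hsum : m (k + 1) - a * m k = 2 * ∑ j, ∑ i, z j ^ (k + 1) * (z j - z i)⁻¹ := by
    rw [hm, hm, mul_sum, mul_sum, ← sum_sub_distrib]
    refine sum_congr rfl fun j _ => ?_
    rw [← mul_sum]
    linear_combination -(z j ^ k) * hstieltjes j
  linear_combination hsum + hsym

/-- The power sums `m_p` of the zeros of the generalized Laguerre polynomial
`L_N^{(a-1)}` satisfy `m_0 = N` and the recurrence
`m_{k+1} = ∑_{s=0}^k m_s m_{k-s} - (k + 1 - a) m_k`. -/
theorem stmt_12 (N : ℕ) (hN : 0 < N) (a : ℝ) (ha : 0 < a)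
    (z : Fin N → ℝ) (hmono : StrictMono z)
    (hzero : ∀ j, (laguerre N a).eval (z j) = 0)
    (m : ℕ → ℝ) (hm : ∀ p, m p = ∑ j, z j ^ p) :
    m 0 = N ∧
      ∀ k : ℕ, m (k + 1) = (∑ s ∈ range (k + 1), m s * m (k - s))
        - ((k : ℝ) + 1 - a) * m k :=
  stmt_12_general N a ha z hmono hzero m hm
end

section
/- Let N be a positive integer and a, b > 0 real. Let z_1, …, z_N be the zeros of the shifted Jacobi polynomial x ↦ P_N^{(a−1,b−1)}(1 − 2x) and define the power sums m_p := z_1^p + ⋯ + z_N^p for integers p ≥ 0. Then m_0 = N and for every integer p ≥ 1 the relation (2N + a + b − 1 − p)·m_p = N(N + a − 1) − b·Σ_{s=1}^{p−1} m_s − Σ_{s=1}^{p−1} m_s m_{p−s} holds (the sums being empty for p = 1). -/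
open Polynomial Finset

/-- The shifted Jacobi polynomial `P_N^{(a-1,b-1)}(1-2x) =
((a)_N / N!) ∑_{m=0}^N ((-N)_m (N+a+b-1)_m / ((a)_m m!)) x^m`,
with `(c)_m` the Pochhammer (rising factorial) symbol. -/
noncomputable def shiftedJacobi (N : ℕ) (a b : ℝ) : Polynomial ℝ :=
  Polynomial.C ((ascPochhammer ℝ N).eval a / (N.factorial : ℝ)) *
    ∑ m ∈ Finset.range (N + 1),
      Polynomial.C ((ascPochhammer ℝ m).eval (-(N : ℝ)) *
          (ascPochhammer ℝ m).eval ((N : ℝ) + a + b - 1) /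
          ((ascPochhammer ℝ m).eval a * (m.factorial : ℝ))) * Polynomial.X ^ m

/-- Coefficients of the series form of the shifted Jacobi polynomial. -/
noncomputable def cmJ (N : ℕ) (a b : ℝ) (n : ℕ) : ℝ :=
  (ascPochhammer ℝ n).eval (-(N : ℝ)) * (ascPochhammer ℝ n).eval ((N : ℝ) + a + b - 1) /
    ((ascPochhammer ℝ n).eval a * (n.factorial : ℝ))

lemma cmJ_eq_zero {N n : ℕ} (a b : ℝ) (h : N < n) : cmJ N a b n = 0 := by
  have h0 : (ascPochhammer ℝ n).eval (-(N : ℝ)) = 0 := by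
    rw [ascPochhammer_eval_eq_zero_iff]
    exact ⟨N, h, by ring⟩
  simp [cmJ, h0]

lemma cmJ_rec (N : ℕ) {a : ℝ} (b : ℝ) (ha : 0 < a) (n : ℕ) :
    ((n : ℝ) + 1) * (a + n) * cmJ N a b (n + 1)
      = ((n : ℝ) - N) * ((N : ℝ) + n + a + b - 1) * cmJ N a b n := by
  have h1 : (ascPochhammer ℝ n).eval a ≠ 0 := (ascPochhammer_pos n a ha).ne'
  have h2 : (n.factorial : ℝ) ≠ 0 := Nat.cast_ne_zero.mpr n.factorial_ne_zero
  have h3 : a + (n : ℝ) ≠ 0 := by positivity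
  have h4 : (n : ℝ) + 1 ≠ 0 := by positivity
  simp only [cmJ, ascPochhammer_succ_eval, Nat.factorial_succ, Nat.cast_mul, Nat.cast_add,
    Nat.cast_one]
  field_simp
  ring

lemma cmJ_ne_zero (N : ℕ) {a b : ℝ} (ha : 0 < a) (hb : 0 < b) (hN : 0 < N) :
    cmJ N a b N ≠ 0 := by
  have h1 : (ascPochhammer ℝ N).eval (-(N : ℝ)) ≠ 0 := by
    rw [Ne, ascPochhammer_eval_eq_zero_iff]
    rintro ⟨k, hk, hke⟩
    rw [neg_neg] at hke
    exact absurd (Nat.cast_injective hke) hk.ne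
  have h2 : (ascPochhammer ℝ N).eval ((N : ℝ) + a + b - 1) ≠ 0 := by
    have hN1 : (1 : ℝ) ≤ (N : ℝ) := by exact_mod_cast hN
    exact (ascPochhammer_pos _ _ (by linarith)).ne'
  have h3 : (ascPochhammer ℝ N).eval a ≠ 0 := (ascPochhammer_pos _ _ ha).ne'
  have h4 : (N.factorial : ℝ) ≠ 0 := Nat.cast_ne_zero.mpr N.factorial_ne_zero
  exact div_ne_zero (mul_ne_zero h1 h2) (mul_ne_zero h3 h4)

/-- The series part of the shifted Jacobi polynomial. -/
noncomputable def jacS (N : ℕ) (a b : ℝ) : Polynomial ℝ :=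
  ∑ m ∈ Finset.range (N + 1), Polynomial.C (cmJ N a b m) * Polynomial.X ^ m

lemma coeff_jacS (N : ℕ) (a b : ℝ) (n : ℕ) : (jacS N a b).coeff n = cmJ N a b n := by
  rw [jacS, finset_sum_coeff]
  simp only [coeff_C_mul, coeff_X_pow, mul_ite, mul_one, mul_zero]
  rw [Finset.sum_ite_eq (range (N + 1)) n (cmJ N a b)]
  split_ifs with h
  · rfl
  · exact (cmJ_eq_zero a b (by simpa using Nat.le_of_not_lt (fun hlt => h (mem_range.mpr hlt)))).symm

/-- The hypergeometric differential equation. -/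
lemma jac_ode (N : ℕ) {a : ℝ} (b : ℝ) (ha : 0 < a) :
    X * (1 - X) * derivative (derivative (jacS N a b))
      + (Polynomial.C a - Polynomial.C (a + b) * X) * derivative (jacS N a b)
      + Polynomial.C ((N : ℝ) * ((N : ℝ) + a + b - 1)) * jacS N a b = 0 := by
  set S := jacS N a b with hSdef
  set D1 := derivative S with hD1
  set D2 := derivative D1 with hD2
  have expand : X * (1 - X) * D2 + (Polynomial.C a - Polynomial.C (a + b) * X) * D1
      + Polynomial.C ((N : ℝ) * ((N : ℝ) + a + b - 1)) * S
      = X * D2 - X ^ 2 * D2 + Polynomial.C a * D1 - Polynomial.C (a + b) * (X * D1)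
        + Polynomial.C ((N : ℝ) * ((N : ℝ) + a + b - 1)) * S := by ring
  rw [expand]
  ext n
  have hS : ∀ k, S.coeff k = cmJ N a b k := coeff_jacS N a b
  have hD1c : ∀ k, D1.coeff k = cmJ N a b (k + 1) * ((k : ℝ) + 1) := by
    intro k; rw [hD1, coeff_derivative, hS]
  have hD2c : ∀ k, D2.coeff k = cmJ N a b (k + 2) * ((k : ℝ) + 2) * ((k : ℝ) + 1) := by
    intro k; rw [hD2, coeff_derivative, hD1c]; push_cast; ring
  simp only [coeff_add, coeff_sub, coeff_zero, coeff_C_mul]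
  obtain _ | _ | n := n
  · have e2 : (X ^ 2 * D2).coeff 0 = 0 := by rw [coeff_X_pow_mul']; simp
    simp only [mul_coeff_zero, coeff_X_zero, zero_mul, e2, hD1c, hS]
    have hrec := cmJ_rec N b ha 0
    push_cast at hrec ⊢
    linear_combination hrec
  · have e1 : (X * D2).coeff 1 = D2.coeff 0 := coeff_X_mul D2 0
    have e2 : (X ^ 2 * D2).coeff 1 = 0 := by rw [coeff_X_pow_mul']; simp
    have e3 : (X * D1).coeff 1 = D1.coeff 0 := coeff_X_mul D1 0
    rw [e1, e2, e3, hD2c, hD1c, hD1c, hS]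
    have hrec := cmJ_rec N b ha 1
    push_cast at hrec ⊢
    linear_combination hrec
  · have e1 : (X * D2).coeff (n + 2) = D2.coeff (n + 1) := coeff_X_mul D2 (n + 1)
    have e2 : (X ^ 2 * D2).coeff (n + 2) = D2.coeff n := coeff_X_pow_mul D2 2 n
    have e3 : (X * D1).coeff (n + 2) = D1.coeff (n + 1) := coeff_X_mul D1 (n + 1)
    rw [e1, e2, e3, hD2c, hD2c, hD1c, hD1c, hS]
    have h13 : n + 1 + 2 = n + 2 + 1 := rfl
    rw [h13]
    have hrec := cmJ_rec N b ha (n + 2)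
    push_cast at hrec ⊢
    linear_combination hrec

/-- Derivative of a finite product. -/
lemma polyDerivFinsetProd {ι : Type*} [DecidableEq ι] (s : Finset ι) (f : ι → Polynomial ℝ) :
    derivative (∏ i ∈ s, f i) = ∑ i ∈ s, (∏ j ∈ s.erase i, f j) * derivative (f i) := by
  induction s using Finset.induction_on with
  | empty => simp
  | @insert i s hi ih =>
    rw [Finset.prod_insert hi, derivative_mul, ih, Finset.sum_insert hi,
      Finset.erase_insert hi, Finset.mul_sum, mul_comm (derivative (f i))]
    congr 1
    refine Finset.sum_congr rfl fun j hj => ?_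
    have hij : i ≠ j := fun h => hi (h ▸ hj)
    rw [Finset.erase_insert_of_ne hij,
      Finset.prod_insert (fun h => hi (Finset.mem_of_mem_erase h)), mul_assoc]

/-- The power sums `m_p` of the zeros of the shifted Jacobi polynomial
`x ↦ P_N^{(a-1,b-1)}(1-2x)` satisfy `m_0 = N` and, for `p ≥ 1`,
`(2N + a + b - 1 - p) m_p = N(N + a - 1) - b ∑_{s=1}^{p-1} m_s - ∑_{s=1}^{p-1} m_s m_{p-s}`. -/
theorem stmt_17 (N : ℕ) (hN : 0 < N) (a b : ℝ) (ha : 0 < a) (hb : 0 < b)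
    (z : Fin N → ℝ) (hmono : StrictMono z)
    (hzero : ∀ j, (shiftedJacobi N a b).eval (z j) = 0)
    (m : ℕ → ℝ) (hm : ∀ p, m p = ∑ j, z j ^ p) :
    m 0 = N ∧
      ∀ p : ℕ, 1 ≤ p →
        (2 * (N : ℝ) + a + b - 1 - p) * m p
          = (N : ℝ) * ((N : ℝ) + a - 1) - b * (∑ s ∈ Ico 1 p, m s)
            - ∑ s ∈ Ico 1 p, m s * m (p - s) := by
  classical
  set Q := shiftedJacobi N a b with hQdef
  set K := (ascPochhammer ℝ N).eval a / (N.factorial : ℝ) with hK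
  have hQS : Q = Polynomial.C K * jacS N a b := rfl
  have hK0 : K ≠ 0 := div_ne_zero (ascPochhammer_pos _ _ ha).ne'
    (Nat.cast_ne_zero.mpr N.factorial_ne_zero)
  have hQcoeff : ∀ n, Q.coeff n = K * cmJ N a b n := fun n => by
    rw [hQS, coeff_C_mul, coeff_jacS]
  set c := K * cmJ N a b N with hcdef
  have hc0 : c ≠ 0 := mul_ne_zero hK0 (cmJ_ne_zero N ha hb hN)
  -- evaluated ODE for Q
  have hODE : ∀ x : ℝ, x * (1 - x) * (derivative (derivative Q)).eval x
      + (a - (a + b) * x) * (derivative Q).eval x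
      + (N : ℝ) * ((N : ℝ) + a + b - 1) * Q.eval x = 0 := by
    intro x
    have h1 : derivative Q = Polynomial.C K * derivative (jacS N a b) := by
      rw [hQS, derivative_C_mul]
    have h2 : derivative (derivative Q)
        = Polynomial.C K * derivative (derivative (jacS N a b)) := by
      rw [h1, derivative_C_mul]
    have h0 := congrArg (Polynomial.eval x) (jac_ode N b ha)
    simp only [eval_add, eval_mul, eval_sub, eval_one, eval_X, eval_C, eval_zero] at h0
    rw [h2, h1, hQS]
    simp only [eval_mul, eval_C]
    linear_combination K * h0
  -- factorization over the roots
  set g := ∏ j : Fin N, (X - Polynomial.C (z j)) with hgdef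
  have hgmonic : g.Monic := monic_prod_of_monic _ _ fun j _ => monic_X_sub_C (z j)
  have hgdeg : g.natDegree = N := by
    rw [hgdef, natDegree_prod _ _ (fun j _ => X_sub_C_ne_zero (z j))]
    simp [natDegree_X_sub_C]
  have hgev : ∀ j, g.eval (z j) = 0 := by
    intro j
    rw [hgdef, eval_prod]
    exact Finset.prod_eq_zero (mem_univ j) (by simp)
  have hPzero : Q - Polynomial.C c * g = 0 := by
    by_cases hP : Q - Polynomial.C c * g = 0
    · exact hP
    have hco : ∀ k : ℕ, N ≤ k → (Q - Polynomial.C c * g).coeff k = 0 := by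
      intro k hk
      rw [coeff_sub, coeff_C_mul, hQcoeff]
      rcases eq_or_lt_of_le hk with heq | hlt
      · subst heq
        have : g.coeff N = 1 := by
          rw [← hgdeg]; exact hgmonic.coeff_natDegree
        rw [this, hcdef, mul_one, sub_self]
      · rw [cmJ_eq_zero a b hlt, coeff_eq_zero_of_natDegree_lt (hgdeg ▸ hlt)]
        ring
    exact Polynomial.eq_zero_of_natDegree_lt_card_of_eval_eq_zero _ hmono.injective
      (fun j => by simp [eval_sub, hzero j, hgev j])
      (by
        rw [Fintype.card_fin]
        rw [natDegree_lt_iff_degree_lt hP]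
        exact (degree_lt_iff_coeff_zero _ _).mpr fun k hk => hco k (by exact_mod_cast hk))
  have hfac : Q = Polynomial.C c * g := sub_eq_zero.mp hPzero
  -- per-root data
  set d : Fin N → ℝ := fun j => ∏ k ∈ univ.erase j, (z j - z k) with hddef
  have hzne : ∀ {j k : Fin N}, k ∈ univ.erase j → z j - z k ≠ 0 := by
    intro j k hk
    exact sub_ne_zero.mpr fun h => (Finset.mem_erase.mp hk).1 (hmono.injective h.symm)
  have hd0 : ∀ j, d j ≠ 0 := fun j =>
    Finset.prod_ne_zero_iff.mpr fun k hk => hzne hk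
  set Sv : Fin N → ℝ := fun j => ∑ k ∈ univ.erase j, (z j - z k)⁻¹ with hSvdef
  have hkey : ∀ j, z j * (1 - z j) * 2 * Sv j + (a - (a + b) * z j) = 0 := by
    intro j
    set gj := ∏ k ∈ univ.erase j, (X - Polynomial.C (z k)) with hgjdef
    have hsplit : g = (X - Polynomial.C (z j)) * gj :=
      (Finset.mul_prod_erase univ _ (mem_univ j)).symm
    have hQfac : Q = Polynomial.C c * ((X - Polynomial.C (z j)) * gj) := by
      rw [hfac, hsplit]
    have hd1 : derivative Q
        = Polynomial.C c * (gj + (X - Polynomial.C (z j)) * derivative gj) := by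
      rw [hQfac, derivative_C_mul, derivative_mul, derivative_X_sub_C]; ring
    have hd2 : derivative (derivative Q)
        = Polynomial.C c * (2 * derivative gj
            + (X - Polynomial.C (z j)) * derivative (derivative gj)) := by
      rw [hd1, derivative_C_mul, derivative_add, derivative_mul, derivative_X_sub_C]; ring
    have hgjev : gj.eval (z j) = d j := by
      rw [hgjdef, eval_prod]; simp [hddef]
    have hgj'ev : (derivative gj).eval (z j) = d j * Sv j := by
      rw [hgjdef, polyDerivFinsetProd, eval_finset_sum]
      have hterm : ∀ k ∈ univ.erase j,
          ((∏ l ∈ (univ.erase j).erase k, (X - Polynomial.C (z l)))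
              * derivative (X - Polynomial.C (z k))).eval (z j)
            = d j * (z j - z k)⁻¹ := by
        intro k hk
        rw [derivative_X_sub_C, mul_one, eval_prod]
        simp only [eval_sub, eval_X, eval_C]
        have hprod : (z j - z k) * ∏ l ∈ (univ.erase j).erase k, (z j - z l) = d j :=
          Finset.mul_prod_erase (univ.erase j) (fun l => z j - z l) hk
        rw [inv_eq_one_div, mul_one_div, eq_div_iff (hzne hk)]
        linear_combination hprod
      rw [Finset.sum_congr rfl hterm, ← Finset.mul_sum]
    have hq1 : (derivative Q).eval (z j) = c * d j := by
      rw [hd1]; simp [hgjev]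
    have hq2 : (derivative (derivative Q)).eval (z j) = c * (2 * (d j * Sv j)) := by
      rw [hd2]; simp [hgj'ev]
    have h := hODE (z j)
    rw [hq1, hq2, hzero j] at h
    have h2 : c * d j * (z j * (1 - z j) * 2 * Sv j + (a - (a + b) * z j)) = 0 := by
      linear_combination h
    rcases mul_eq_zero.mp h2 with h3 | h3
    · exact absurd h3 (mul_ne_zero hc0 (hd0 j))
    · exact h3
  -- power sums of the roots
  have m0 : m 0 = N := by rw [hm]; simp
  have swap : ∀ F : Fin N → Fin N → ℝ,
      ∑ j, ∑ k ∈ univ.erase j, F j k = ∑ j, ∑ k ∈ univ.erase j, F k j := by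
    intro F
    exact Finset.sum_comm' (by intro x y; simp [Finset.mem_erase]; tauto)
  have Tform : ∀ q : ℕ, 2 * ∑ j, z j ^ (q + 1) * Sv j
      = (∑ s ∈ range (q + 1), m s * m (q - s)) - ((q : ℝ) + 1) * m q := by
    intro q
    set A := ∑ j, ∑ k ∈ univ.erase j, z j ^ (q + 1) * (z j - z k)⁻¹ with hA
    have step1 : ∑ j, z j ^ (q + 1) * Sv j = A := by
      refine Finset.sum_congr rfl fun j _ => ?_
      rw [hSvdef, Finset.mul_sum]
    have hB : ∑ j, ∑ k ∈ univ.erase j, z k ^ (q + 1) * (z j - z k)⁻¹ = -A := by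
      rw [swap (fun j k => z k ^ (q + 1) * (z j - z k)⁻¹), hA, ← Finset.sum_neg_distrib]
      refine Finset.sum_congr rfl fun j _ => ?_
      rw [← Finset.sum_neg_distrib]
      refine Finset.sum_congr rfl fun k hk => ?_
      rw [show z k - z j = -(z j - z k) from by ring, inv_neg]
      ring
    have hgeom : ∀ j : Fin N, ∀ k ∈ univ.erase j,
        (∑ s ∈ range (q + 1), z j ^ s * z k ^ (q - s))
          = z j ^ (q + 1) * (z j - z k)⁻¹ - z k ^ (q + 1) * (z j - z k)⁻¹ := by
      intro j k hk
      have h := geom_sum₂_mul (z j) (z k) (q + 1)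
      have h2 : q + 1 - 1 = q := rfl
      rw [h2] at h
      have h3 : (∑ s ∈ range (q + 1), z j ^ s * z k ^ (q - s))
          = ((∑ s ∈ range (q + 1), z j ^ s * z k ^ (q - s)) * (z j - z k)) * (z j - z k)⁻¹ :=
        (mul_inv_cancel_right₀ (hzne hk) _).symm
      rw [h3, h]
      ring
    have step3 : 2 * ∑ j, z j ^ (q + 1) * Sv j
        = ∑ j, ∑ k ∈ univ.erase j, ∑ s ∈ range (q + 1), z j ^ s * z k ^ (q - s) := by
      rw [step1]
      have hcalc : (2 : ℝ) * A = A - (-A) := by ring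
      rw [hcalc, ← hB, hA, ← Finset.sum_sub_distrib]
      refine Finset.sum_congr rfl fun j _ => ?_
      rw [← Finset.sum_sub_distrib]
      exact Finset.sum_congr rfl fun k hk => (hgeom j k hk).symm
    have step4 : ∑ j, ∑ k ∈ univ.erase j, ∑ s ∈ range (q + 1), z j ^ s * z k ^ (q - s)
        = (∑ s ∈ range (q + 1), m s * m (q - s)) - ((q : ℝ) + 1) * m q := by
      have h1 : ∀ j : Fin N, ∑ k ∈ univ.erase j, ∑ s ∈ range (q + 1), z j ^ s * z k ^ (q - s)
          = ∑ s ∈ range (q + 1), z j ^ s * (m (q - s) - z j ^ (q - s)) := by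
        intro j
        rw [Finset.sum_comm]
        refine Finset.sum_congr rfl fun s hs => ?_
        rw [← Finset.mul_sum, Finset.sum_erase_eq_sub (mem_univ j), ← hm]
      rw [Finset.sum_congr rfl fun j _ => h1 j, Finset.sum_comm]
      have h2 : ∀ s ∈ range (q + 1), ∑ j, z j ^ s * (m (q - s) - z j ^ (q - s))
          = m s * m (q - s) - m q := by
        intro s hs
        have hsq : s + (q - s) = q := Nat.add_sub_cancel' (Nat.lt_succ_iff.mp (mem_range.mp hs))
        have h3 : ∀ j : Fin N, z j ^ s * (m (q - s) - z j ^ (q - s))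
            = z j ^ s * m (q - s) - z j ^ q := by
          intro j
          have h4 := pow_add (z j) s (q - s)
          rw [hsq] at h4
          linear_combination h4
        rw [Finset.sum_congr rfl fun j _ => h3 j, Finset.sum_sub_distrib, ← Finset.sum_mul,
          ← hm, ← hm]
      rw [Finset.sum_congr rfl h2, Finset.sum_sub_distrib, Finset.sum_const, card_range]
      push_cast [nsmul_eq_mul]
      ring
    rw [step3, step4]
  have sumrel : ∀ p : ℕ, 2 * (∑ j, z j ^ (p + 1) * Sv j) - 2 * (∑ j, z j ^ (p + 2) * Sv j)
      + a * m p - (a + b) * m (p + 1) = 0 := by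
    intro p
    have h : ∑ j, (2 * (z j ^ (p + 1) * Sv j) - 2 * (z j ^ (p + 2) * Sv j)
        + (a * z j ^ p - (a + b) * z j ^ (p + 1))) = 0 :=
      Finset.sum_eq_zero fun j _ => by linear_combination (z j ^ p) * hkey j
    rw [Finset.sum_add_distrib, Finset.sum_sub_distrib, Finset.sum_sub_distrib,
      ← Finset.mul_sum, ← Finset.mul_sum, ← Finset.mul_sum, ← Finset.mul_sum] at h
    rw [hm p, hm (p + 1)]
    linear_combination h
  have Rrel : ∀ p : ℕ, (∑ s ∈ range (p + 1), m s * m (p - s)) - ((p : ℝ) + 1) * m p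
      - ((∑ s ∈ range (p + 2), m s * m (p + 1 - s)) - ((p : ℝ) + 2) * m (p + 1))
      + a * m p - (a + b) * m (p + 1) = 0 := by
    intro p
    have t1 := Tform p
    have t2 := Tform (p + 1)
    simp only [show p + 1 + 1 = p + 2 from rfl] at t2
    push_cast at t2
    linear_combination sumrel p - t1 + t2
  have convsplit : ∀ q : ℕ, ∑ s ∈ range (q + 2), m s * m (q + 1 - s)
      = m 0 * m (q + 1) + (∑ s ∈ Ico 1 (q + 1), m s * m (q + 1 - s)) + m (q + 1) * m 0 := by
    intro q
    rw [range_eq_Ico, Finset.sum_eq_sum_Ico_succ_bot (by omega)]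
    rw [Finset.sum_Ico_succ_top (by omega : 1 ≤ q + 1)]
    simp only [Nat.sub_zero, Nat.sub_self]
    ring
  have main : ∀ q : ℕ, (2 * (N : ℝ) + a + b - 1 - ((q : ℝ) + 1)) * m (q + 1)
      = (N : ℝ) * ((N : ℝ) + a - 1) - b * (∑ s ∈ Ico 1 (q + 1), m s)
        - ∑ s ∈ Ico 1 (q + 1), m s * m (q + 1 - s) := by
    intro q
    induction q with
    | zero =>
      have h := Rrel 0
      rw [Finset.sum_range_one, Finset.sum_range_succ, Finset.sum_range_one] at h
      norm_num at h ⊢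
      rw [m0] at h
      try simp only [Finset.Ico_self, Finset.sum_empty]
      linear_combination -h
    | succ q IH =>
      have h := Rrel (q + 1)
      have c2 := convsplit (q + 1)
      simp only [show q + 1 + 1 = q + 2 from rfl, show q + 1 + 2 = q + 3 from rfl,
        show q + 2 + 1 = q + 3 from rfl] at h c2 ⊢
      rw [convsplit q, c2, m0] at h
      have ic : ∑ s ∈ Ico 1 (q + 2), m s = (∑ s ∈ Ico 1 (q + 1), m s) + m (q + 1) := by
        have := Finset.sum_Ico_succ_top (by omega : 1 ≤ q + 1) m
        simpa using this
      rw [ic]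
      push_cast at IH h ⊢
      linear_combination IH - h
  refine ⟨m0, fun p hp => ?_⟩
  obtain ⟨q, rfl⟩ : ∃ q, p = q + 1 := ⟨p - 1, by omega⟩
  have h := main q
  push_cast at h ⊢
  linear_combination h
end
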